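/- Let x be a feasible half-integral Held–Karp solution whose weight-1/2 edges decompose into edge-disjoint triangles. If H, T₁,…,T_t is a comb violated by x with x(δ(Tᵢ)) = 2 for all i and x(δ*(H)) = 1/2, then a contradiction follows; i.e., x(δ*(H)) cannot equal 1/2 when all teeth have boundary weight 2. -/

import Mathlib

/-!
Every cut of `x` has integral weight: the weight-1 edges contribute integers, and each
triangle of the decomposition crosses a cut in an even number (0 or 2) of edges of weight 1/2.
For a tooth `T = A ⊔ B` the subtour constraints give
`4 ≤ x(δ(A)) + x(δ(B)) = x(δ(T)) + 2 x(e(A, B))`, so `x(e(A, B)) ≥ 1` when `x(δ(T)) = 2`.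
Hence `x(δ*(H)) = 1/2` forces `x(δ(H)) ≥ t + 1/2`, while the violated comb inequality gives
`x(δ(H)) < t + 1`, and no integer lies in between.
-/

open Finset

variable {V : Type*} [Fintype V] [DecidableEq V]

/-- Total x-weight of edges leaving `S` (each crossing edge counted once, from inside to outside). -/
def cutVal (x : V → V → ℝ) (S : Finset V) : ℝ := ∑ i ∈ S, ∑ j ∈ Sᶜ, x i j

/-- Total x-weight of edges between disjoint sets `A` and `B`. -/
def eVal (x : V → V → ℝ) (A B : Finset V) : ℝ := ∑ i ∈ A, ∑ j ∈ B, x i j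

/-- The support graph of an edge weighting. -/
def support (x : V → V → ℝ) : SimpleGraph V where
  Adj i j := i ≠ j ∧ (0 < x i j ∨ 0 < x j i)
  symm := ⟨fun i j h => ⟨h.1.symm, h.2.symm⟩⟩
  loopless := ⟨fun i h => h.1 rfl⟩

/-- The weight-1/2 edges of `x` decompose into the edge-disjoint triangles `𝒯`. -/
def TriDecomp (x : V → V → ℝ) (𝒯 : Finset (Finset V)) : Prop :=
  (∀ tr ∈ 𝒯, tr.card = 3) ∧
  (∀ tr ∈ 𝒯, ∀ i ∈ tr, ∀ j ∈ tr, i ≠ j → x i j = 1 / 2) ∧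
  (∀ i j : V, i ≠ j → x i j = 1 / 2 → ∃! tr, tr ∈ 𝒯 ∧ i ∈ tr ∧ j ∈ tr)

theorem exists_int_sum_eq {ι : Type*} (s : Finset ι) (f : ι → ℝ)
    (hf : ∀ i ∈ s, ∃ n : ℤ, f i = n) : ∃ n : ℤ, ∑ i ∈ s, f i = n :=
  Finset.sum_induction f (fun r => ∃ n : ℤ, r = n)
    (fun _ _ ⟨m, hm⟩ ⟨n, hn⟩ => ⟨m + n, by rw [hm, hn, Int.cast_add]⟩) ⟨0, by simp⟩ hf

theorem even_card_inter_mul_card_sdiff {α : Type*} [DecidableEq α] {tr : Finset α}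
    (htr : #tr = 3) (S : Finset α) : Even (#(tr ∩ S) * #(tr \ S)) := by
  have := card_inter_add_card_sdiff tr S
  rw [htr] at this
  rw [Nat.even_mul, Nat.even_iff, Nat.even_iff]
  omega

theorem eVal_union_right {α : Type*} [DecidableEq α] {x : α → α → ℝ} {B C : Finset α}
    (A : Finset α) (hBC : Disjoint B C) :
    eVal x A (B ∪ C) = eVal x A B + eVal x A C := by
  simp only [eVal, sum_union hBC, sum_add_distrib]

theorem eVal_union_left {α : Type*} [DecidableEq α] {x : α → α → ℝ} {A B : Finset α}
    (C : Finset α) (hAB : Disjoint A B) :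
    eVal x (A ∪ B) C = eVal x A C + eVal x B C :=
  sum_union hAB

theorem eVal_comm {α : Type*} {x : α → α → ℝ} (hsym : ∀ i j, x i j = x j i)
    (A B : Finset α) :
    eVal x B A = eVal x A B := by
  rw [eVal, eVal, sum_comm]
  exact sum_congr rfl fun i _ => sum_congr rfl fun j _ => hsym j i

section Cuts

variable {x : V → V → ℝ}

theorem compl_eq_union_compl_union {A B : Finset V} (hAB : Disjoint A B) :
    Aᶜ = B ∪ (A ∪ B)ᶜ := by
  ext v
  have : v ∈ A → v ∉ B := fun h => disjoint_left.mp hAB h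
  simp only [mem_compl, mem_union]
  tauto

theorem cutVal_add_cutVal (hsym : ∀ i j, x i j = x j i) {A B : Finset V}
    (hAB : Disjoint A B) :
    cutVal x A + cutVal x B = cutVal x (A ∪ B) + 2 * eVal x A B := by
  have hA : cutVal x A = eVal x A B + eVal x A (A ∪ B)ᶜ := by
    change eVal x A Aᶜ = _
    rw [compl_eq_union_compl_union hAB,
      eVal_union_right A (disjoint_compl_right.mono_right (compl_le_compl subset_union_right))]
  have hB : cutVal x B = eVal x B A + eVal x B (A ∪ B)ᶜ := by
    change eVal x B Bᶜ = _
    rw [compl_eq_union_compl_union hAB.symm, union_comm B A,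
      eVal_union_right B (disjoint_compl_right.mono_right (compl_le_compl subset_union_left))]
  have hAB' : cutVal x (A ∪ B) = eVal x A (A ∪ B)ᶜ + eVal x B (A ∪ B)ᶜ :=
    eVal_union_left _ hAB
  rw [hA, hB, hAB', eVal_comm hsym]
  ring

theorem four_le_cutVal_union_add_eVal (hsym : ∀ i j, x i j = x j i)
    (hsub : ∀ S : Finset V, S.Nonempty → S ≠ univ → 2 ≤ cutVal x S)
    {A B : Finset V} (hA : A.Nonempty) (hB : B.Nonempty) (hAB : Disjoint A B) :
    4 ≤ cutVal x (A ∪ B) + 2 * eVal x A B := by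
  have hA' := hsub A hA fun h => disjoint_left.mp hAB (h ▸ mem_univ _) hB.choose_spec
  have hB' := hsub B hB fun h => disjoint_left.mp hAB hA.choose_spec (h ▸ mem_univ _)
  linarith [cutVal_add_cutVal hsym hAB]

end Cuts

namespace TriDecomp

variable {x : V → V → ℝ} {𝒯 : Finset (Finset V)}

theorem filter_half_eq_biUnion (htri : TriDecomp x 𝒯) (S : Finset V) :
    (S ×ˢ Sᶜ).filter (fun p => x p.1 p.2 = 1 / 2) =
      𝒯.biUnion fun tr => (tr ∩ S) ×ˢ (tr \ S) := by
  obtain ⟨-, hhalf, huniq⟩ := htri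
  ext ⟨i, j⟩
  simp only [mem_filter, mem_product, mem_biUnion, mem_inter, mem_sdiff, mem_compl]
  constructor
  · rintro ⟨⟨hi, hj⟩, hx⟩
    obtain ⟨tr, ⟨htr, hitr, hjtr⟩, -⟩ := huniq i j (fun h => hj (h ▸ hi)) hx
    exact ⟨tr, htr, ⟨hitr, hi⟩, hjtr, hj⟩
  · rintro ⟨tr, htr, ⟨hitr, hi⟩, hjtr, hj⟩
    exact ⟨⟨hi, hj⟩, hhalf tr htr i hitr j hjtr fun h => hj (h ▸ hi)⟩

theorem pairwiseDisjoint_crossing {α : Type*} [DecidableEq α] {x : α → α → ℝ}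
    {𝒯 : Finset (Finset α)} (htri : TriDecomp x 𝒯) (S : Finset α) :
    (𝒯 : Set (Finset α)).PairwiseDisjoint fun tr => (tr ∩ S) ×ˢ (tr \ S) := by
  obtain ⟨-, hhalf, huniq⟩ := htri
  intro tr htr tr' htr' hne
  refine disjoint_left.mpr fun ⟨i, j⟩ hp hp' => hne ?_
  simp only [mem_product, mem_inter, mem_sdiff] at hp hp'
  have hij : i ≠ j := fun h => hp.2.2 (h ▸ hp.1.2)
  exact (huniq i j hij (hhalf tr htr i hp.1.1 j hp.2.1 hij)).unique
    ⟨htr, hp.1.1, hp.2.1⟩ ⟨htr', hp'.1.1, hp'.2.1⟩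

/-- A triangle `tr` crosses the cut `S` in `#(tr ∩ S) * #(tr \ S)` edges, an even number. -/
theorem exists_int_sum_half_crossing (htri : TriDecomp x 𝒯) (S : Finset V) :
    ∃ n : ℤ, ∑ p ∈ (S ×ˢ Sᶜ).filter (fun p => x p.1 p.2 = 1 / 2), x p.1 p.2 = n := by
  rw [htri.filter_half_eq_biUnion, sum_biUnion (htri.pairwiseDisjoint_crossing S)]
  refine exists_int_sum_eq _ _ fun tr htr => ?_
  obtain ⟨m, hm⟩ := even_card_inter_mul_card_sdiff (htri.1 tr htr) S
  refine ⟨m, ?_⟩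
  have hx : ∀ p ∈ (tr ∩ S) ×ˢ (tr \ S), x p.1 p.2 = 1 / 2 := by
    rintro ⟨i, j⟩ hp
    simp only [mem_product, mem_inter, mem_sdiff] at hp
    exact htri.2.1 tr htr i hp.1.1 j hp.2.1 fun h => hp.2.2 (h ▸ hp.1.2)
  rw [sum_congr rfl hx, sum_const, card_product, hm, nsmul_eq_mul]
  push_cast
  ring

theorem exists_int_cutVal (hval : ∀ i j, x i j = 0 ∨ x i j = 1 / 2 ∨ x i j = 1)
    (htri : TriDecomp x 𝒯) (S : Finset V) : ∃ n : ℤ, cutVal x S = n := by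
  rw [cutVal, ← sum_product' S Sᶜ x,
    ← sum_filter_add_sum_filter_not _ (fun p => x p.1 p.2 = 1 / 2)]
  obtain ⟨m, hm⟩ := htri.exists_int_sum_half_crossing S
  obtain ⟨k, hk⟩ : ∃ k : ℤ,
      ∑ p ∈ (S ×ˢ Sᶜ).filter (fun p => ¬x p.1 p.2 = 1 / 2), x p.1 p.2 = k := by
    refine exists_int_sum_eq _ _ fun p hp => ?_
    rcases hval p.1 p.2 with h | h | h
    · exact ⟨0, by simp [h]⟩
    · exact absurd h (mem_filter.mp hp).2
    · exact ⟨1, by simp [h]⟩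
  exact ⟨m + k, by rw [hm, hk, Int.cast_add]⟩

end TriDecomp

theorem deltaStar_ne_half_general
    (x : V → V → ℝ)
    (hsym : ∀ i j, x i j = x j i)
    (hval : ∀ i j, x i j = 0 ∨ x i j = 1 / 2 ∨ x i j = 1)
    (hsub : ∀ S : Finset V, S.Nonempty → S ≠ Finset.univ → 2 ≤ cutVal x S)
    (𝒯 : Finset (Finset V)) (htri : TriDecomp x 𝒯)
    (H : Finset V) (t : ℕ) (T : Fin t → Finset V)
    (hteeth : ∀ i, ((T i) ∩ H).Nonempty ∧ ((T i) \ H).Nonempty)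
    (hviol : cutVal x H + ∑ i, cutVal x (T i) < 3 * (t : ℝ) + 1)
    (hT2 : ∀ i, cutVal x (T i) = 2) :
    cutVal x H - ∑ i, eVal x ((T i) ∩ H) ((T i) \ H) ≠ 1 / 2 := by
  intro hstar
  have htooth : ∀ i, 1 ≤ eVal x (T i ∩ H) (T i \ H) := fun i => by
    have := four_le_cutVal_union_add_eVal hsym hsub (hteeth i).1 (hteeth i).2
      (disjoint_sdiff_inter (T i) H).symm
    rw [union_comm, sdiff_union_inter, hT2 i] at this
    linarith
  have hsum : (t : ℝ) ≤ ∑ i, eVal x (T i ∩ H) (T i \ H) := by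
    simpa using card_nsmul_le_sum univ _ 1 fun i _ => htooth i
  have hH : cutVal x H < t + 1 := by
    simp only [hT2, sum_const, card_univ, Fintype.card_fin, nsmul_eq_mul] at hviol
    linarith
  obtain ⟨n, hn⟩ := htri.exists_int_cutVal hval H
  have hlow : (t : ℤ) < n := by exact_mod_cast (show (t : ℝ) < n by linarith)
  have hup : n < (t : ℤ) + 1 := by exact_mod_cast (show (n : ℝ) < t + 1 by linarith)
  omega

/-- In a violated comb all of whose teeth have boundary weight 2, the weight of edges
leaving the handle that are not inside a tooth cannot be 1/2. -/
theorem deltaStar_ne_half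
    (x : V → V → ℝ)
    (hsym : ∀ i j, x i j = x j i)
    (hdiag : ∀ i, x i i = 0)
    (hval : ∀ i j, x i j = 0 ∨ x i j = 1 / 2 ∨ x i j = 1)
    (hdeg : ∀ i : V, ∑ j, x i j = 2)
    (hsub : ∀ S : Finset V, S.Nonempty → S ≠ Finset.univ → 2 ≤ cutVal x S)
    (𝒯 : Finset (Finset V)) (htri : TriDecomp x 𝒯)
    (H : Finset V) (t : ℕ) (ht : Odd t) (T : Fin t → Finset V)
    (hdisj : ∀ i j, i ≠ j → Disjoint (T i) (T j))
    (hteeth : ∀ i, ((T i) ∩ H).Nonempty ∧ ((T i) \ H).Nonempty)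
    (hviol : cutVal x H + ∑ i, cutVal x (T i) < 3 * (t : ℝ) + 1)
    (hT2 : ∀ i, cutVal x (T i) = 2) :
    cutVal x H - ∑ i, eVal x ((T i) ∩ H) ((T i) \ H) ≠ 1 / 2 :=
  deltaStar_ne_half_general x hsym hval hsub 𝒯 htri H t T hteeth hviol hT2
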